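/- Any covering of the segment (ε, 1) by N sets, each of hyperbolic diameter at most D in the annulus A(ε/2, 2), requires N ≥ (hyperbolic diameter of (ε,1) in A(ε/2,2))/D ≥ c·log|log ε|/D for small ε. Consequently, the number of maps (0,1) → X_ε of bounded ω-norm (holomorphic extension to a 1-neighborhood with bound 2) needed to cover X_ε = {xy = ε} ∩ (-1,1)² tends to infinity as ε → 0, at rate at least proportional to log|log ε|. -/

import Mathlib

open Set UpperHalfPlane

/-- `p : ℍ → ℂ` is a holomorphic covering map onto the plane domain `S`:
it takes values in `S`, is surjective onto `S`, holomorphic, and a covering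
map onto `S`.  The Poincaré metric on `ℍ` then descends to `S`. -/
def IsHolomorphicCoveringOnto (p : UpperHalfPlane → ℂ) (S : Set ℂ) : Prop :=
  ∃ h : ∀ z, p z ∈ S,
    Function.Surjective (Set.codRestrict p S h) ∧
    (∃ P : ℂ → ℂ, DifferentiableOn ℂ P {z : ℂ | 0 < z.im} ∧
      ∀ z : UpperHalfPlane, P ↑z = p z) ∧
    IsCoveringMap (Set.codRestrict p S h)

/-- The hyperbolic distance on a domain covered by `p : ℍ → ℂ`: the infimum of
hyperbolic distances between preimages.  (Here `ℍ` carries its Poincaré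
metric.) -/
noncomputable def hypDist (p : UpperHalfPlane → ℂ) (x y : ℂ) : ℝ :=
  sInf {d | ∃ z w : UpperHalfPlane, p z = x ∧ p w = y ∧ d = dist z w}

/-- The annulus `{z : ℂ | a < |z| < b}`. -/
def Annulus (a b : ℝ) : Set ℂ := {z : ℂ | a < ‖z‖ ∧ ‖z‖ < b}

/-- The complex `1`-neighborhood of the interval `(0,1)`. -/
def NbhdOne : Set ℂ := {z : ℂ | ∃ t ∈ Set.Ioo (0:ℝ) 1, dist z (t : ℂ) < 1}

/-- The hyperbola piece `X_ε = {xy = ε} ∩ (-1,1)²`, viewed inside `ℂ × ℂ`. -/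
def Xe (ε : ℝ) : Set (ℂ × ℂ) :=
  {w | w.1.im = 0 ∧ w.2.im = 0 ∧ w.1.re ∈ Set.Ioo (-1:ℝ) 1 ∧
    w.2.re ∈ Set.Ioo (-1:ℝ) 1 ∧ w.1 * w.2 = (ε : ℂ)}

/-!
For a holomorphic map `P` from `ℍ` to the punctured disc of radius `R`, a branch of
`i (log R - log P)` maps `ℍ` to itself, so by Schwarz–Pick and `|log Im a - log Im b| ≤ d(a, b)`
the function `log (log (R / ‖P‖))` is `1`-Lipschitz for the hyperbolic metric. With `R = e` it
vanishes at `1` and is at least `log |log ε|` at `ε`. For the annulus, apply this to the universal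
covering. For a chart `(0,1) → X_ε`, apply it to the first coordinate `x` on the disc `B(1/2, 1)`:
there `x y = ε` still holds by the identity theorem, so `x ≠ 0`, and `(0,1)` has hyperbolic
diameter at most `2 log 3` in that disc. In both cases the image of `(ε, 1)` under
`log (log (e / ·))`, an interval of length at least `log |log ε|`, is covered by `N` sets of
diameter `D`, whence `log |log ε| ≤ N D`.
-/

open Metric Filter Topology ComplexConjugate

section Cayley

open Complex

noncomputable def cayley (w z : ℂ) : ℂ := (z - w) / (z - conj w)

noncomputable def cayleyInv (w u : ℂ) : ℂ := (w - u * conj w) / (1 - u)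

lemma sub_conj_ne_zero {z w : ℂ} (hz : 0 < z.im) (hw : 0 < w.im) : z - conj w ≠ 0 := by
  intro h
  have := congrArg Complex.im h
  simp only [sub_im, conj_im, sub_neg_eq_add, zero_im] at this
  linarith

lemma norm_cayley_lt_one {z w : ℂ} (hz : 0 < z.im) (hw : 0 < w.im) : ‖cayley w z‖ < 1 := by
  rw [cayley, norm_div, div_lt_one (norm_pos_iff.mpr (sub_conj_ne_zero hz hw)),
    ← sq_lt_sq₀ (norm_nonneg _) (norm_nonneg _), Complex.sq_norm, Complex.sq_norm]
  simp only [normSq_apply, sub_re, sub_im, conj_re, conj_im]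
  nlinarith [mul_pos hz hw]

lemma im_cayleyInv_pos {w u : ℂ} (hw : 0 < w.im) (hu : ‖u‖ < 1) : 0 < (cayleyInv w u).im := by
  have hu1 : 1 - u ≠ 0 := sub_ne_zero.mpr fun h => by simp [← h] at hu
  have him : (cayleyInv w u).im = w.im * (1 - normSq u) / normSq (1 - u) := by
    rw [cayleyInv, div_im, ← sub_div]
    congr 1
    simp only [sub_re, sub_im, mul_re, mul_im, conj_re, conj_im, one_re, one_im, normSq_apply]
    ring
  have hnormSq : normSq u < 1 := by rw [normSq_eq_norm_sq]; nlinarith [norm_nonneg u]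
  rw [him]
  exact div_pos (mul_pos hw (by linarith)) (normSq_pos.mpr hu1)

lemma cayleyInv_cayley {z w : ℂ} (hz : 0 < z.im) (hw : 0 < w.im) :
    cayleyInv w (cayley w z) = z := by
  have hz' := sub_conj_ne_zero hz hw
  have hw' := sub_conj_ne_zero hw hw
  have h1 : 1 - cayley w z = (w - conj w) / (z - conj w) := by
    rw [cayley]; field_simp; ring
  rw [cayleyInv, h1, div_eq_iff (div_ne_zero hw' hz'), cayley]
  field_simp
  ring

lemma cayley_cayleyInv {w u : ℂ} (hw : 0 < w.im) (hu : u ≠ 1) :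
    cayley w (cayleyInv w u) = u := by
  have hu' : 1 - u ≠ 0 := sub_ne_zero.mpr hu.symm
  have hw' := sub_conj_ne_zero hw hw
  have h1 : cayleyInv w u - w = u * (w - conj w) / (1 - u) := by
    rw [cayleyInv]; field_simp; ring
  have h2 : cayleyInv w u - conj w = (w - conj w) / (1 - u) := by
    rw [cayleyInv]; field_simp; ring
  rw [cayley, h1, h2]
  field_simp

lemma differentiableOn_cayley {w : ℂ} (hw : 0 < w.im) :
    DifferentiableOn ℂ (cayley w) {z | 0 < z.im} :=
  (differentiableOn_id.sub_const w).div (differentiableOn_id.sub_const _)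
    fun _ hz => sub_conj_ne_zero hz hw

lemma differentiableOn_cayleyInv (w : ℂ) : DifferentiableOn ℂ (cayleyInv w) (ball 0 1) :=
  ((differentiableOn_const w).sub (differentiableOn_id.mul_const _)).div
    ((differentiableOn_const 1).sub differentiableOn_id)
    fun u hu => sub_ne_zero.mpr fun h => by simp [← h] at hu

lemma UpperHalfPlane.dist_eq_two_mul_artanh (z w : ℍ) :
    dist z w = 2 * Real.artanh ‖cayley w z‖ := by
  rw [cayley, norm_div, ← Complex.dist_eq, ← Complex.dist_eq, ← tanh_half_dist, Real.artanh_tanh]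
  ring

lemma UpperHalfPlane.exists_cayley_eq (w : ℍ) {u : ℂ} (hu : ‖u‖ < 1) :
    ∃ z : ℍ, cayley w z = u :=
  ⟨mk _ (im_cayleyInv_pos w.2 hu), cayley_cayleyInv w.2 fun h => by simp [h] at hu⟩

/-- Schwarz–Pick lemma for the upper half plane. -/
theorem norm_cayley_le_of_mapsTo {F : ℂ → ℂ} (hF : DifferentiableOn ℂ F {z | 0 < z.im})
    (hmaps : MapsTo F {z | 0 < z.im} {z | 0 < z.im}) {z w : ℂ} (hz : 0 < z.im)
    (hw : 0 < w.im) : ‖cayley (F w) (F z)‖ ≤ ‖cayley w z‖ := by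
  have hFw : 0 < (F w).im := hmaps hw
  have hinv : MapsTo (cayleyInv w) (ball 0 1) {z | 0 < z.im} := fun u hu =>
    im_cayleyInv_pos hw (mem_ball_zero_iff.mp hu)
  have hk : DifferentiableOn ℂ (fun u => cayley (F w) (F (cayleyInv w u))) (ball 0 1) :=
    (differentiableOn_cayley hFw).comp (hF.comp (differentiableOn_cayleyInv w) hinv)
      (hmaps.comp hinv)
  have hkmaps : MapsTo (fun u => cayley (F w) (F (cayleyInv w u))) (ball 0 1)
      (closedBall 0 1) := fun u hu =>
    mem_closedBall_zero_iff.mpr (norm_cayley_lt_one (hmaps (hinv hu)) hFw).le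
  have h := Complex.norm_le_norm_of_mapsTo_ball hk hkmaps (by simp [cayleyInv, cayley])
    (norm_cayley_lt_one hz hw)
  rwa [cayleyInv_cayley hz hw] at h

theorem UpperHalfPlane.dist_le_of_mapsTo {F : ℂ → ℂ} (hF : DifferentiableOn ℂ F {z | 0 < z.im})
    (hmaps : MapsTo F {z | 0 < z.im} {z | 0 < z.im}) (z w : ℍ) :
    dist (mk (F z) (hmaps z.2)) (mk (F w) (hmaps w.2)) ≤ dist z w := by
  rw [dist_eq_two_mul_artanh, dist_eq_two_mul_artanh]
  gcongr
  exact Real.artanh_le_artanh (by linarith [norm_nonneg (cayley (F w) (F z))])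
    (norm_cayley_lt_one z.2 w.2) (norm_cayley_le_of_mapsTo hF hmaps z.2 w.2)

/-- Near `z₀`, `f` differs from `log (g z / g z₀)` by the constant `f z₀`. -/
lemma differentiableOn_of_eqOn_exp_comp {f g : ℂ → ℂ} {U : Set ℂ} (hU : IsOpen U)
    (hf : ContinuousOn f U) (hg : DifferentiableOn ℂ g U) (hfg : EqOn (exp ∘ f) g U) :
    DifferentiableOn ℂ f U := by
  intro z₀ hz₀
  have hg₀ : g z₀ ≠ 0 := hfg hz₀ ▸ exp_ne_zero _
  have hlocal : (fun z => f z₀ + log (g z / g z₀)) =ᶠ[𝓝 z₀] f := by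
    filter_upwards [hU.mem_nhds hz₀,
      (hf.continuousAt (hU.mem_nhds hz₀)).eventually (ball_mem_nhds (f z₀) Real.pi_pos)]
      with z hz hfz
    have hdist : ‖f z - f z₀‖ < Real.pi := by rwa [← dist_eq_norm]
    have him := abs_lt.mp ((abs_im_le_norm _).trans_lt hdist)
    rw [← hfg hz, ← hfg hz₀, Function.comp_apply, Function.comp_apply, ← exp_sub,
      log_exp him.1 him.2.le]
    ring
  have hdiff : DifferentiableAt ℂ (fun z => f z₀ + log (g z / g z₀)) z₀ :=
    ((hg.differentiableAt (hU.mem_nhds hz₀)).div_const _).clog (by simp [hg₀]) |>.const_add _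
  exact (hdiff.congr_of_eventuallyEq hlocal.symm).differentiableWithinAt

theorem exists_differentiableOn_eqOn_exp_comp {U : Set ℂ} (hUc : IsSimplyConnected U)
    (hUo : IsOpen U) {g : ℂ → ℂ} (hg : DifferentiableOn ℂ g U) (hg₀ : ∀ z ∈ U, g z ≠ 0) :
    ∃ f : ℂ → ℂ, DifferentiableOn ℂ f U ∧ EqOn (exp ∘ f) g U := by
  obtain ⟨f, hf, hfg⟩ := exists_continuousOn_eqOn_exp_comp hUc hUo hg.continuousOn
    fun ⟨z, hz, h⟩ => hg₀ z hz h
  exact ⟨f, differentiableOn_of_eqOn_exp_comp hUo hf hg hfg, hfg⟩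

lemma isSimplyConnected_setOf_im_pos : IsSimplyConnected {z : ℂ | 0 < z.im} :=
  have := (convex_halfSpace_im_gt 0).contractibleSpace ⟨Complex.I, by simp⟩
  SimplyConnectedSpace.ofContractible _

end Cayley

open Real

/-- Composing a logarithm of `P` with `ζ ↦ i (log R - ζ)` gives a self-map of `ℍ` with imaginary
part `log (R / ‖P‖)`, to which Schwarz–Pick applies. -/
theorem lipschitzWith_log_log_div_norm {P : ℂ → ℂ} {R : ℝ}
    (hP : DifferentiableOn ℂ P {z | 0 < z.im}) (hP₀ : ∀ z ∈ {z : ℂ | 0 < z.im}, P z ≠ 0)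
    (hPR : ∀ z ∈ {z : ℂ | 0 < z.im}, ‖P z‖ < R) :
    LipschitzWith 1 (fun z : ℍ => log (log (R / ‖P z‖))) := by
  obtain ⟨g, hg, hgP⟩ := exists_differentiableOn_eqOn_exp_comp isSimplyConnected_setOf_im_pos
    (isOpen_lt continuous_const Complex.continuous_im) hP hP₀
  set F : ℂ → ℂ := fun z => Complex.I * (log R - g z)
  have hF_im : ∀ z ∈ {z : ℂ | 0 < z.im}, (F z).im = log (R / ‖P z‖) := by
    intro z hz
    have hre : (g z).re = log ‖P z‖ := by
      rw [← hgP hz, Function.comp_apply, Complex.norm_exp, log_exp]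
    have hR : 0 < R := (norm_nonneg _).trans_lt (hPR z hz)
    rw [log_div hR.ne' (norm_ne_zero_iff.mpr (hP₀ z hz)), ← hre]
    simp [F]
  have hmaps : MapsTo F {z | 0 < z.im} {z | 0 < z.im} := fun z hz => by
    rw [mem_ofPred_eq, hF_im z hz]
    exact log_pos ((one_lt_div (norm_pos_iff.mpr (hP₀ z hz))).mpr (hPR z hz))
  have hF : DifferentiableOn ℂ F {z | 0 < z.im} :=
    ((differentiableOn_const _).sub hg).const_mul Complex.I
  refine LipschitzWith.of_dist_le_mul fun z w => ?_
  calc dist (log (log (R / ‖P z‖))) (log (log (R / ‖P w‖)))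
      = dist (log (mk (F z) (hmaps z.2)).im) (log (mk (F w) (hmaps w.2)).im) := by
        simp only [UpperHalfPlane.mk_im, hF_im z z.2, hF_im w w.2]
    _ ≤ dist (mk (F z) (hmaps z.2)) (mk (F w) (hmaps w.2)) := dist_log_im_le _ _
    _ ≤ dist z w := UpperHalfPlane.dist_le_of_mapsTo hF hmaps z w
    _ = (1 : NNReal) * dist z w := by rw [NNReal.coe_one, one_mul]

theorem abs_log_log_div_norm_sub_le {Q : ℂ → ℂ} {R : ℝ} {c : ℂ}
    (hQ : DifferentiableOn ℂ Q (ball c 1)) (hQ₀ : ∀ z ∈ ball c 1, Q z ≠ 0)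
    (hQR : ∀ z ∈ ball c 1, ‖Q z‖ < R) {z₁ z₂ : ℂ} (h₁ : z₁ ∈ ball c 1) (h₂ : z₂ ∈ ball c 1) :
    |log (log (R / ‖Q z₁‖)) - log (log (R / ‖Q z₂‖))| ≤
      2 * artanh (dist z₁ c) + 2 * artanh (dist z₂ c) := by
  have hmaps : MapsTo (fun ζ => c + cayley Complex.I ζ) {z | 0 < z.im} (ball c 1) :=
    fun ζ hζ => by simpa using norm_cayley_lt_one hζ (by simp : (0 : ℝ) < Complex.I.im)
  have hlip := lipschitzWith_log_log_div_norm
    (hQ.comp ((differentiableOn_const c).add (differentiableOn_cayley (by simp))) hmaps)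
    (fun ζ hζ => hQ₀ _ (hmaps hζ)) (fun ζ hζ => hQR _ (hmaps hζ))
  have hpre : ∀ z ∈ ball c 1, ∃ ζ : ℍ, c + cayley Complex.I ζ = z ∧
      dist ζ UpperHalfPlane.I = 2 * artanh (dist z c) := fun z hz => by
    obtain ⟨ζ, hζ⟩ := exists_cayley_eq UpperHalfPlane.I (u := z - c) (by rwa [← dist_eq_norm])
    refine ⟨ζ, ?_, ?_⟩
    · rw [← coe_I, hζ]; ring
    · rw [dist_eq_two_mul_artanh, hζ, dist_eq_norm]
  obtain ⟨ζ₁, rfl, hζ₁⟩ := hpre z₁ h₁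
  obtain ⟨ζ₂, rfl, hζ₂⟩ := hpre z₂ h₂
  calc _ ≤ dist ζ₁ ζ₂ := by simpa [Real.dist_eq] using hlip.dist_le_mul ζ₁ ζ₂
    _ ≤ dist ζ₁ UpperHalfPlane.I + dist ζ₂ UpperHalfPlane.I := dist_triangle_right _ _ _
    _ = _ := by rw [hζ₁, hζ₂]

open MeasureTheory in
lemma sub_le_card_mul_of_Ioo_subset_iUnion {ι : Type*} [Fintype ι] {A : ι → Set ℝ} {a b d : ℝ}
    (hd : 0 ≤ d) (hA : Ioo a b ⊆ ⋃ i, A i) (hAd : ∀ i, ∀ x ∈ A i, ∀ y ∈ A i, |x - y| ≤ d) :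
    b - a ≤ Fintype.card ι * d := by
  rw [← ENNReal.ofReal_le_ofReal_iff (by positivity)]
  calc ENNReal.ofReal (b - a) = volume (Ioo a b) := volume_Ioo.symm
    _ ≤ ∑ i, volume (A i) := (measure_mono hA).trans (measure_iUnion_fintype_le _ _)
    _ ≤ ∑ _i : ι, ENNReal.ofReal d := Finset.sum_le_sum fun i _ =>
        (volume_le_diam _).trans <| ediam_le fun x hx y hy => by
          rw [edist_dist, Real.dist_eq]
          exact ENNReal.ofReal_le_ofReal (hAd i x hx y hy)
    _ = ENNReal.ofReal (Fintype.card ι * d) := by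
        rw [Finset.sum_const, Finset.card_univ, nsmul_eq_mul, ENNReal.ofReal_mul (by positivity),
          ENNReal.ofReal_natCast]

lemma ContinuousOn.sub_le_card_mul_of_Ioo_subset_iUnion {ι : Type*} [Fintype ι] {f : ℝ → ℝ}
    {T : ι → Set ℝ} {a b d : ℝ} (hab : a ≤ b) (hf : ContinuousOn f (Icc a b)) (hd : 0 ≤ d)
    (hT : Ioo a b ⊆ ⋃ i, T i) (hTd : ∀ i, ∀ x ∈ T i, ∀ y ∈ T i, |f x - f y| ≤ d) :
    f a - f b ≤ Fintype.card ι * d := by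
  refine _root_.sub_le_card_mul_of_Ioo_subset_iUnion (A := fun i => f '' T i) hd ?_ ?_
  · intro y hy
    obtain ⟨x, hx, rfl⟩ := intermediate_value_Ioo' hab hf hy
    obtain ⟨i, hi⟩ := mem_iUnion.mp (hT hx)
    exact mem_iUnion.mpr ⟨i, x, hi, rfl⟩
  · rintro i _ ⟨x, hx, rfl⟩ _ ⟨y, hy, rfl⟩
    exact hTd i x hx y hy

lemma continuousOn_log_log_div {R a b : ℝ} (ha : 0 < a) (hbR : b < R) :
    ContinuousOn (fun x => log (log (R / x))) (Icc a b) := by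
  have hx0 : ∀ x ∈ Icc a b, 0 < x := fun x hx => ha.trans_le hx.1
  refine ContinuousOn.log (ContinuousOn.log (continuousOn_const.div continuousOn_id
    fun x hx => (hx0 x hx).ne') fun x hx => ?_) fun x hx => ?_
  · exact (div_pos ((hx0 x hx).trans (hx.2.trans_lt hbR)) (hx0 x hx)).ne'
  · exact (log_pos ((one_lt_div (hx0 x hx)).mpr (hx.2.trans_lt hbR))).ne'

/-- `e` is chosen so that `log (log (e / x))` vanishes at `x = 1`. -/
lemma log_abs_log_le_card_mul {ι : Type*} [Fintype ι] {T : ι → Set ℝ} {ε d : ℝ}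
    (hε : ε ∈ Ioo 0 1) (hd : 0 ≤ d) (hT : Ioo ε 1 ⊆ ⋃ i, T i)
    (hTd : ∀ i, ∀ x ∈ T i, ∀ y ∈ T i, |log (log (exp 1 / x)) - log (log (exp 1 / y))| ≤ d) :
    log |log ε| ≤ Fintype.card ι * d := by
  have hchain := (continuousOn_log_log_div hε.1 (one_lt_exp_iff.mpr one_pos))
    |>.sub_le_card_mul_of_Ioo_subset_iUnion hε.2.le hd hT hTd
  have hlog : log ε < 0 := log_neg hε.1 hε.2
  refine le_trans ?_ hchain
  rw [div_one, log_exp, log_one, sub_zero, log_div (exp_pos 1).ne' hε.1.ne', log_exp,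
    abs_of_neg hlog]
  exact log_le_log (by linarith) (by linarith)

lemma IsHolomorphicCoveringOnto.subset_range {p : ℍ → ℂ} {S : Set ℂ}
    (hp : IsHolomorphicCoveringOnto p S) : S ⊆ range p := by
  obtain ⟨_, hsurj, -⟩ := hp
  intro x hx
  obtain ⟨z, hz⟩ := hsurj ⟨x, hx⟩
  exact ⟨z, congrArg Subtype.val hz⟩

lemma abs_sub_le_hypDist {p : ℍ → ℂ} {ψ : ℂ → ℝ} (hψ : LipschitzWith 1 (ψ ∘ p)) {x y : ℂ}
    (hx : x ∈ range p) (hy : y ∈ range p) : |ψ x - ψ y| ≤ hypDist p x y := by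
  obtain ⟨z, rfl⟩ := hx
  obtain ⟨w, rfl⟩ := hy
  refine le_csInf ⟨_, z, w, rfl, rfl, rfl⟩ ?_
  rintro _ ⟨z', w', hz', hw', rfl⟩
  simpa [Real.dist_eq, hz', hw'] using hψ.dist_le_mul z' w'

theorem log_abs_log_le_card_mul_of_hypDist_le {ι : Type*} [Fintype ι] {ε D : ℝ}
    (hε : ε ∈ Ioo 0 1) (hD : 0 ≤ D) {p : ℍ → ℂ}
    (hp : IsHolomorphicCoveringOnto p (Annulus (ε / 2) 2)) {U : ι → Set ℂ}
    (hU : (fun t : ℝ => (t : ℂ)) '' Ioo ε 1 ⊆ ⋃ i, U i)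
    (hUD : ∀ i, ∀ x ∈ U i, ∀ y ∈ U i, hypDist p x y ≤ D) :
    log |log ε| ≤ Fintype.card ι * D := by
  have hrange : ∀ t ∈ Ioo ε 1, (t : ℂ) ∈ range p := fun t ht => by
    refine hp.subset_range ⟨?_, ?_⟩ <;>
      simp only [Complex.norm_real, norm_eq_abs, abs_of_pos (hε.1.trans ht.1)] <;>
      linarith [ht.1, ht.2, hε.1]
  obtain ⟨hpS, -, ⟨P, hP, hPp⟩, -⟩ := hp
  have hPS : ∀ z ∈ {z : ℂ | 0 < z.im}, P z ∈ Annulus (ε / 2) 2 := fun z hz =>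
    hPp ⟨z, hz⟩ ▸ hpS _
  have hlip := lipschitzWith_log_log_div_norm (R := exp 1) hP
    (fun z hz => norm_pos_iff.mp ((half_pos hε.1).trans (hPS z hz).1))
    (fun z hz => (hPS z hz).2.trans (by linarith [exp_one_gt_d9]))
  simp only [hPp] at hlip
  refine log_abs_log_le_card_mul hε hD (T := fun i => {t ∈ Ioo ε 1 | (t : ℂ) ∈ U i}) ?_ ?_
  · intro t ht
    obtain ⟨i, hi⟩ := mem_iUnion.mp (hU ⟨t, ht, rfl⟩)
    exact mem_iUnion.mpr ⟨i, ht, hi⟩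
  · rintro i x ⟨hx, hxU⟩ y ⟨hy, hyU⟩
    have h := abs_sub_le_hypDist (ψ := fun x => log (log (exp 1 / ‖x‖))) hlip
      (hrange x hx) (hrange y hy)
    simp only [Complex.norm_real, norm_eq_abs, abs_of_pos (hε.1.trans hx.1),
      abs_of_pos (hε.1.trans hy.1)] at h
    exact h.trans (hUD i _ hxU _ hyU)

lemma AnalyticOnNhd.eqOn_of_preconnected_of_eventuallyEq_ofReal {f g : ℂ → ℂ} {U : Set ℂ}
    (hf : AnalyticOnNhd ℂ f U) (hg : AnalyticOnNhd ℂ g U) (hU : IsPreconnected U) {x : ℝ}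
    (hx : (x : ℂ) ∈ U) (hfg : ∀ᶠ t : ℝ in 𝓝 x, f t = g t) : EqOn f g U := by
  refine hf.eqOn_of_preconnected_of_frequently_eq hg hU hx ?_
  have hofReal : Tendsto ((↑) : ℝ → ℂ) (𝓝[≠] x) (𝓝[≠] (x : ℂ)) :=
    tendsto_nhdsWithin_of_tendsto_nhds_of_eventually_within _
      Complex.continuous_ofReal.continuousWithinAt.tendsto
      (eventually_nhdsWithin_of_forall fun t ht => by simpa using ht)
  exact hofReal.frequently (hfg.filter_mono nhdsWithin_le_nhds).frequently

lemma two_mul_artanh_dist_half_le {t : ℝ} (ht : t ∈ Ioo 0 1) :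
    2 * artanh (dist (t : ℂ) (1 / 2)) ≤ log 3 := by
  have hdist : dist (t : ℂ) (1 / 2) = |t - 1 / 2| := by
    rw [Complex.dist_eq, ← norm_eq_abs, ← Complex.norm_real]; push_cast; rfl
  have hhalf : artanh (1 / 2) = log 3 / 2 := by
    rw [artanh_eq_half_log (by constructor <;> norm_num)]; norm_num; ring
  rw [hdist]
  have := artanh_le_artanh (x := |t - 1 / 2|) (y := 1 / 2)
    (by linarith [abs_nonneg (t - 1 / 2)]) (by norm_num)
    (abs_le.mpr ⟨by linarith [ht.1], by linarith [ht.2]⟩)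
  linarith

lemma ofReal_prod_mem_Xe {ε x : ℝ} (hε : 0 < ε) (hx : x ∈ Ioo ε 1) :
    ((x : ℂ), ((ε / x : ℝ) : ℂ)) ∈ Xe ε := by
  have hx0 : 0 < x := hε.trans hx.1
  refine ⟨Complex.ofReal_im _, Complex.ofReal_im _, ?_, ?_, ?_⟩
  · simp only [Complex.ofReal_re]; constructor <;> linarith [hx.2]
  · simp only [Complex.ofReal_re]
    constructor
    · linarith [div_pos hε hx0]
    · exact (div_lt_one hx0).mpr hx.1
  · rw [← Complex.ofReal_mul, mul_div_cancel₀ _ hx0.ne']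

/-- On the disc `B(1/2, 1)` the identity theorem keeps `x y = ε`, so `‖y‖ ≤ 2` keeps the first
coordinate `x` away from `0`. -/
theorem abs_log_log_div_norm_fst_sub_le {ε : ℝ} (hε : 0 < ε) {f : ℂ → ℂ × ℂ}
    (hf : DifferentiableOn ℂ f NbhdOne)
    (hbound : ∀ z ∈ NbhdOne, ‖(f z).1‖ ≤ 2 ∧ ‖(f z).2‖ ≤ 2)
    (hXe : ∀ t ∈ Ioo (0 : ℝ) 1, f t ∈ Xe ε) {s t : ℝ} (hs : s ∈ Ioo 0 1) (ht : t ∈ Ioo 0 1) :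
    |log (log (exp 1 / ‖(f s).1‖)) - log (log (exp 1 / ‖(f t).1‖))| ≤ 2 * log 3 := by
  have hball : ball (1 / 2 : ℂ) 1 ⊆ NbhdOne := fun z hz => ⟨1 / 2, by norm_num, by simpa using hz⟩
  have hprod : EqOn (fun z => (f z).1 * (f z).2) (fun _ => (ε : ℂ)) (ball (1 / 2) 1) :=
    AnalyticOnNhd.eqOn_of_preconnected_of_eventuallyEq_ofReal
      ((hf.fst.mul hf.snd).mono hball |>.analyticOnNhd isOpen_ball) analyticOnNhd_const
      (convex_ball _ _).isPreconnected (x := 1 / 2) (by simp) <| by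
        filter_upwards [Ioo_mem_nhds (by norm_num : (0 : ℝ) < 1 / 2)
          (by norm_num : (1 / 2 : ℝ) < 1)] with t ht using (hXe t ht).2.2.2.2
  have hfst : ∀ z ∈ ball (1 / 2 : ℂ) 1, (f z).1 ≠ 0 := fun z hz =>
    left_ne_zero_of_mul (b := (f z).2) <| by
      have h : (f z).1 * (f z).2 = ε := hprod hz
      exact h ▸ Complex.ofReal_ne_zero.mpr hε.ne'
  have hmem : ∀ t ∈ Ioo (0 : ℝ) 1, (t : ℂ) ∈ ball (1 / 2) 1 := fun t ht => by
    rw [mem_ball, Complex.dist_eq, ← Complex.ofReal_one, ← Complex.ofReal_ofNat,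
      ← Complex.ofReal_div, ← Complex.ofReal_sub, Complex.norm_real, norm_eq_abs, abs_lt]
    constructor <;> linarith [ht.1, ht.2]
  calc _ ≤ 2 * artanh (dist (s : ℂ) (1 / 2)) + 2 * artanh (dist (t : ℂ) (1 / 2)) :=
        abs_log_log_div_norm_sub_le (hf.fst.mono hball) hfst
          (fun z hz => (hbound z (hball hz)).1.trans_lt (by linarith [exp_one_gt_d9]))
          (hmem s hs) (hmem t ht)
    _ ≤ 2 * log 3 := by
        linarith [two_mul_artanh_dist_half_le hs, two_mul_artanh_dist_half_le ht]

theorem log_abs_log_le_card_mul_of_Xe_subset {ι : Type*} [Fintype ι] {ε : ℝ} (hε : ε ∈ Ioo 0 1)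
    {F : ι → ℂ → ℂ × ℂ}
    (hF : ∀ i, DifferentiableOn ℂ (F i) NbhdOne ∧
      (∀ z ∈ NbhdOne, ‖(F i z).1‖ ≤ 2 ∧ ‖(F i z).2‖ ≤ 2) ∧ ∀ t ∈ Ioo (0 : ℝ) 1, F i t ∈ Xe ε)
    (hcover : Xe ε ⊆ ⋃ i, F i '' ((fun t : ℝ => (t : ℂ)) '' Ioo 0 1)) :
    log |log ε| ≤ Fintype.card ι * (2 * log 3) := by
  refine log_abs_log_le_card_mul hε (by positivity)
    (T := fun i => (fun s : ℝ => ‖(F i s).1‖) '' Ioo 0 1) (fun x hx => ?_) ?_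
  · obtain ⟨i, _, ⟨s, hs, rfl⟩, hFs⟩ := mem_iUnion.mp (hcover (ofReal_prod_mem_Xe hε.1 hx))
    refine mem_iUnion.mpr ⟨i, s, hs, ?_⟩
    simp [hFs, abs_of_pos (hε.1.trans hx.1)]
  · rintro i _ ⟨s, hs, rfl⟩ _ ⟨t, ht, rfl⟩
    exact abs_log_log_div_norm_fst_sub_le hε.1 (hF i).1 (hF i).2.1 (hF i).2.2 hs ht

/-- Any covering of the segment `(ε,1)` by `N` sets of hyperbolic diameter at
most `D` in the annulus `A(ε/2,2)` requires `N ≥ c·log|log ε|/D`; consequently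
the number of maps `(0,1) → X_ε` of bounded `ω`-norm (holomorphic extension to
the `1`-neighborhood, bounded by `2`) needed to cover `X_ε` is at least
proportional to `log |log ε|` as `ε → 0`. -/
theorem covering_count_lower_bound :
    ∃ c : ℝ, 0 < c ∧ ∃ C : ℝ, 0 < C ∧ ∃ ε₀ : ℝ, 0 < ε₀ ∧ ε₀ < 1 ∧
      ∀ ε : ℝ, ε ∈ Set.Ioo 0 ε₀ →
        ∀ p : UpperHalfPlane → ℂ,
          IsHolomorphicCoveringOnto p (Annulus (ε / 2) 2) →
          ((∀ D : ℝ, 0 < D → ∀ N : ℕ, ∀ U : Fin N → Set ℂ,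
              ((fun t : ℝ => (t : ℂ)) '' Set.Ioo ε 1 ⊆ ⋃ i, U i) →
              (∀ i, ∀ x ∈ U i, ∀ y ∈ U i, hypDist p x y ≤ D) →
              c * Real.log |Real.log ε| / D ≤ (N : ℝ)) ∧
           (∀ N : ℕ, ∀ F : Fin N → ℂ → ℂ × ℂ,
              (∀ i, DifferentiableOn ℂ (F i) NbhdOne ∧
                (∀ z ∈ NbhdOne,
                  ‖((F i) z).1‖ ≤ 2 ∧ ‖((F i) z).2‖ ≤ 2) ∧
                (∀ t : ℝ, t ∈ Set.Ioo (0:ℝ) 1 → F i (t : ℂ) ∈ Xe ε)) →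
              (Xe ε ⊆ ⋃ i, F i '' ((fun t : ℝ => (t : ℂ)) '' Set.Ioo (0:ℝ) 1)) →
              c * Real.log |Real.log ε| / C ≤ (N : ℝ))) := by
  refine ⟨1, one_pos, 2 * Real.log 3, by positivity, 1 / 2, by norm_num, by norm_num, ?_⟩
  rintro ε ⟨hε₀, hε⟩ p hp
  have hε₁ : ε ∈ Ioo 0 1 := ⟨hε₀, hε.trans (by norm_num)⟩
  refine ⟨fun D hD N U hU hUD => ?_, fun N F hF hcover => ?_⟩
  · rw [one_mul, div_le_iff₀ hD]
    simpa using log_abs_log_le_card_mul_of_hypDist_le hε₁ hD.le hp hU hUD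
  · rw [one_mul, div_le_iff₀ (by positivity)]
    simpa using log_abs_log_le_card_mul_of_Xe_subset hε₁ hF hcover
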